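/- arXiv:math-ph/0101005 — 7 statements merged into one kernel-verified Lean document; each statement's English description precedes it below -/
import Mathlib

section
/- Let V be a finite set and Δ a toppling matrix on V. If η : V → ℕ is unstable at two sites x and z (i.e. η(x) > Δ_{xx} and η(z) > Δ_{zz}), then toppling first at x and then at z yields the same configuration as toppling first at z and then at x: T(T(η,x),z) = T(T(η,z),x). -/
/-- The toppling operator: if `η` is unstable at `x` (i.e. `η x > Δ x x`), site `x`
topples, transferring `-Δ x y` grains to each `y ≠ x` and losing `Δ x x` grains. -/
def toppleM {V : Type*} (Δ : V → V → ℤ) (η : V → ℕ) (x : V) : V → ℕ :=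
  if (Δ x x : ℤ) < (η x : ℤ) then fun y => ((η y : ℤ) - Δ x y).toNat else η

/-- Topplings at two unstable sites commute: `T(T(η,x),z) = T(T(η,z),x)`. -/
theorem toppleM_comm {V : Type*} [Fintype V] (Δ : V → V → ℤ)
    (hsymm : ∀ x y : V, x ≠ y → Δ x y = Δ y x)
    (hoff : ∀ x y : V, x ≠ y → Δ x y ≤ 0)
    (hdiag : ∀ x : V, 1 ≤ Δ x x)
    (hrow : ∀ x : V, 0 ≤ ∑ y : V, Δ x y)
    (htot : 0 < ∑ x : V, ∑ y : V, Δ x y)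
    (η : V → ℕ) (hη : ∀ y : V, 1 ≤ η y)
    (x z : V) (hx : Δ x x < (η x : ℤ)) (hz : Δ z z < (η z : ℤ)) :
    toppleM Δ (toppleM Δ η x) z = toppleM Δ (toppleM Δ η z) x := by
  rcases eq_or_ne x z with rfl | hxz
  · rfl
  · have key : ∀ a b : V, a ≠ b → Δ a a < (η a : ℤ) → Δ b b < (η b : ℤ) →
        toppleM Δ (toppleM Δ η a) b = fun y => ((η y : ℤ) - Δ a y - Δ b y).toNat := by
      intro a b hab ha hb
      have hnn : ∀ y : V, 0 ≤ (η y : ℤ) - Δ a y := by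
        intro y
        rcases eq_or_ne a y with rfl | h
        · linarith
        · have := hoff a y h
          have : (0:ℤ) ≤ η y := Int.natCast_nonneg _
          linarith [hoff a y h]
      have h1 : toppleM Δ η a = fun y => ((η y : ℤ) - Δ a y).toNat := by
        simp [toppleM, ha]
      have h2 : (Δ b b : ℤ) < ((toppleM Δ η a b : ℕ) : ℤ) := by
        rw [h1]
        simp only
        rw [Int.toNat_of_nonneg (hnn b)]
        have := hoff a b hab
        linarith
      rw [toppleM, if_pos h2, h1]
      funext y
      simp only
      rw [Int.toNat_of_nonneg (hnn y)]
    rw [key x z hxz hx hz, key z x hxz.symm hz hx]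
    funext y
    rw [sub_right_comm]
end

section
/- Let V be a finite nonempty subset of the rootless binary tree S, let x ∉ V be a vertex having exactly one neighbour in V, and set W = V ∪ {x}. Let μ_V and μ_W be the uniform probability measures on 𝒜_V and 𝒜_W respectively, and let f : Ω_V → ℝ (regarded as a function on Ω_W via restriction of configurations to V). Then |E_{μ_W}[f] − E_{μ_V}[f]| ≤ |E_{μ_W}[f·1{ζ(x)=3}] − E_{μ_W}[f]·μ_W(ζ(x)=3)| / μ_W(ζ(x)=3), the bound being the truncated correlation of f with the event {ζ(x)=3} divided by the probability of that event. -/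
open Finset

/-- `S` is the vertex set of the rootless binary tree: a connected acyclic simple
graph in which every vertex has exactly 3 neighbours. -/
def IsBinaryTree {S : Type*} (G : SimpleGraph S) : Prop :=
  G.Connected ∧ G.IsAcyclic ∧ ∀ v : S, {w : S | G.Adj v w}.ncard = 3

variable {S : Type*} [DecidableEq S]

/-- Toppling at site `x` inside the finite volume `V`: `x` loses 3 grains and each
neighbour of `x` lying in `V` receives one grain (grains sent outside `V` are lost). -/
def toppleAt (G : SimpleGraph S) [DecidableRel G.Adj] (V : Finset S)
    (η : S → ℕ) (x : S) : S → ℕ :=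
  fun y => if y = x then η x - 3 else if y ∈ V ∧ G.Adj x y then η y + 1 else η y

/-- Applying a finite sequence of topplings (given as a list of sites). -/
def applySeq (G : SimpleGraph S) [DecidableRel G.Adj] (V : Finset S) :
    (S → ℕ) → List S → (S → ℕ)
  | η, [] => η
  | η, x :: L => applySeq G V (toppleAt G V η x) L

/-- A list of sites is a legal toppling sequence from `η`: each toppled site lies in
`V` and has height `> 3` at the moment it is toppled. -/
def LegalSeq (G : SimpleGraph S) [DecidableRel G.Adj] (V : Finset S) :
    (S → ℕ) → List S → Prop
  | _, [] => True
  | η, x :: L => x ∈ V ∧ 3 < η x ∧ LegalSeq G V (toppleAt G V η x) L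

/-- `η` is stable on `V`: all heights in `V` are at most 3. -/
def Stable (V : Finset S) (η : S → ℕ) : Prop := ∀ x ∈ V, η x ≤ 3

/-- `η` is a stable configuration on `V`: heights in `V` lie in `{1,2,3}`. -/
def StableConfig (V : Finset S) (η : S → ℕ) : Prop := ∀ x ∈ V, 1 ≤ η x ∧ η x ≤ 3

/-- `ζ` is a stabilization of `η` in `V`: it is reached from `η` by a finite legal
sequence of topplings and is stable. -/
def Stabilizes (G : SimpleGraph S) [DecidableRel G.Adj] (V : Finset S)
    (η ζ : S → ℕ) : Prop :=
  ∃ L : List S, LegalSeq G V η L ∧ applySeq G V η L = ζ ∧ Stable V ζ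

open scoped Classical in
/-- The stabilization map `𝒯` (well defined since stabilization exists and is
unique, by the abelian property). -/
noncomputable def stabilize (G : SimpleGraph S) [DecidableRel G.Adj] (V : Finset S)
    (η : S → ℕ) : S → ℕ :=
  if h : ∃ ζ, Stabilizes G V η ζ then h.choose else η

/-- Adding one grain at `x`. -/
def addGrain (x : S) (η : S → ℕ) : S → ℕ := Function.update η x (η x + 1)

/-- The addition operator `a_{x,V}`: add one grain at `x` and stabilize in `V`. -/
noncomputable def addOp (G : SimpleGraph S) [DecidableRel G.Adj] (V : Finset S)
    (x : S) (η : S → ℕ) : S → ℕ :=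
  stabilize G V (addGrain x η)

/-- `η` contains a forbidden subconfiguration in `V`: there is a nonempty `W ⊆ V`
such that every `x ∈ W` has height at most the number of its neighbours in `W`. -/
def HasFSC (G : SimpleGraph S) [DecidableRel G.Adj] (V : Finset S)
    (η : S → ℕ) : Prop :=
  ∃ W : Finset S, W ⊆ V ∧ W.Nonempty ∧
    ∀ x ∈ W, η x ≤ (W.filter (fun y => y ≠ x ∧ G.Adj x y)).card

/-- `η` is an allowed stable configuration on `V`. -/
def Allowed (G : SimpleGraph S) [DecidableRel G.Adj] (V : Finset S)
    (η : S → ℕ) : Prop :=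
  StableConfig V η ∧ ¬ HasFSC G V η

/-- `η` is an allowed stable configuration on `V`, padded with height 1 outside `V`
(a canonical representative, used for counting and summing over `𝒜_V`). -/
def AllowedExt (G : SimpleGraph S) [DecidableRel G.Adj] (V : Finset S)
    (η : S → ℕ) : Prop :=
  Allowed G V η ∧ ∀ x ∉ V, η x = 1

/-- The expectation of `f` under the uniform measure on the (finite) set `A`. -/
noncomputable def expectOn (A : Set (S → ℕ)) (f : (S → ℕ) → ℝ) : ℝ :=
  (∑ᶠ η ∈ A, f η) / (A.ncard : ℝ)

/-!
The restriction `ζ ↦ ζ|_V` is a bijection from `{ζ ∈ 𝒜_W : ζ x = 3}` onto `𝒜_V`: since `x` has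
a single neighbour in `V`, the height `3` at `x` can never take part in a forbidden
subconfiguration, and removing `x` cannot create one. Hence `E_{μ_V}[f] = E_{μ_W}[f | ζ x = 3]`,
and for any event `B` of positive probability
`E[f·1_B] - E[f] P(B) = P(B) (E[f | B] - E[f])`, which gives the bound (with equality).
The event `{ζ x = 3}` has positive probability because on a forest the constant
configuration `3` is allowed: every finite nonempty vertex set contains a vertex with at most
one neighbour in it.
-/

namespace SimpleGraph

variable {V : Type*} {G : SimpleGraph V}

/-- An endpoint of a longest path is a leaf: a neighbour off the path would extend it, and a
neighbour on the path other than the next vertex would close a cycle. -/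
lemma IsAcyclic.exists_neighborSet_subsingleton [Finite V] [Nonempty V] (hG : G.IsAcyclic) :
    ∃ u, (G.neighborSet u).Subsingleton := by
  obtain ⟨u, v, p, hp, hmax⟩ := Walk.exists_isPath_forall_isPath_length_le_length G
  have eq_snd : ∀ w, G.Adj u w → w = p.snd := fun w hw ↦ by
    by_cases hsupp : w ∈ p.support
    · exact hG.eq_snd_of_adj_start hp hw hsupp
    · have := hmax _ _ _ (hp.cons hsupp (h := hw.symm))
      simp at this
  exact ⟨u, fun w hw w' hw' ↦ (eq_snd w hw).trans (eq_snd w' hw').symm⟩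

lemma IsAcyclic.exists_mem_card_filter_adj_le_one [DecidableEq V] [DecidableRel G.Adj]
    (hG : G.IsAcyclic) (W : Finset V) (hW : W.Nonempty) :
    ∃ u ∈ W, (W.filter (fun y => y ≠ u ∧ G.Adj u y)).card ≤ 1 := by
  have : Nonempty (W : Set V) := hW.to_subtype
  obtain ⟨⟨u, hu⟩, hleaf⟩ := (hG.induce (W : Set V)).exists_neighborSet_subsingleton
  refine ⟨u, hu, Finset.card_le_one.mpr fun a ha b hb ↦ ?_⟩
  simp only [Finset.mem_filter] at ha hb
  simpa using @hleaf ⟨a, ha.1⟩ (by simpa using ha.2.2) ⟨b, hb.1⟩ (by simpa using hb.2.2)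

end SimpleGraph

section Configurations

variable (G : SimpleGraph S) [DecidableRel G.Adj]

lemma not_hasFSC_of_forall_two_le (hG : G.IsAcyclic) {V : Finset S} {η : S → ℕ}
    (hη : ∀ v ∈ V, 2 ≤ η v) : ¬ HasFSC G V η := by
  rintro ⟨W, hWV, hWne, hW⟩
  obtain ⟨u, hu, hle⟩ := hG.exists_mem_card_filter_adj_le_one W hWne
  have := hW u hu
  have := hη u (hWV hu)
  omega

lemma allowedExt_three (hG : G.IsAcyclic) (V : Finset S) :
    AllowedExt G V (fun y => if y ∈ V then 3 else 1) := by
  exact ⟨⟨fun y hy ↦ by simp [hy], not_hasFSC_of_forall_two_le G hG fun y hy ↦ by simp [hy]⟩,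
    fun y hy ↦ by simp [hy]⟩

lemma finite_setOf_allowedExt (V : Finset S) : {η | AllowedExt G V η}.Finite := by
  refine (Set.finite_range fun g : V → Fin 3 ↦ fun y ↦
    if h : y ∈ V then (g ⟨y, h⟩ : ℕ) + 1 else 1).subset fun η hη ↦ ?_
  refine ⟨fun v ↦ ⟨η v - 1, by have := hη.1.1 v v.2; omega⟩, funext fun y ↦ ?_⟩
  by_cases hy : y ∈ V
  · have := hη.1.1 y hy
    simp only [hy, dif_pos]
    omega
  · simp [hy, hη.2 y hy]

variable {G} {V : Finset S} {x : S}

lemma allowedExt_update_one (hx : x ∉ V) {ζ : S → ℕ} (hζ : AllowedExt G (insert x V) ζ) :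
    AllowedExt G V (Function.update ζ x 1) := by
  obtain ⟨⟨hst, hfsc⟩, hpad⟩ := hζ
  have hupd : ∀ v ∈ V, Function.update ζ x 1 v = ζ v := fun v hv ↦
    Function.update_of_ne (ne_of_mem_of_not_mem hv hx) _ _
  refine ⟨⟨fun v hv ↦ hupd v hv ▸ hst v (mem_insert_of_mem hv), ?_⟩, fun y hy ↦ ?_⟩
  · rintro ⟨W, hWV, hWne, hW⟩
    exact hfsc ⟨W, hWV.trans (subset_insert x V), hWne, fun u hu ↦ hupd u (hWV hu) ▸ hW u hu⟩
  · rcases eq_or_ne y x with rfl | hyx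
    · simp
    · rw [Function.update_of_ne hyx]
      exact hpad y (by simp [hyx, hy])

/-- In a forbidden subconfiguration containing `x`, the height `3` at `x` would need three
neighbours of `x` in `V`. -/
lemma allowedExt_update_three (hx : x ∉ V) (hnb : (V.filter (fun y => G.Adj x y)).card < 3)
    {η : S → ℕ} (hη : AllowedExt G V η) :
    AllowedExt G (insert x V) (Function.update η x 3) := by
  obtain ⟨⟨hst, hfsc⟩, hpad⟩ := hη
  have hupd : ∀ v ∈ V, Function.update η x 3 v = η v := fun v hv ↦
    Function.update_of_ne (ne_of_mem_of_not_mem hv hx) _ _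
  refine ⟨⟨fun v hv ↦ ?_, ?_⟩, fun y hy ↦ ?_⟩
  · rcases mem_insert.mp hv with rfl | hv
    · simp
    · exact hupd v hv ▸ hst v hv
  · rintro ⟨W, hWV, hWne, hW⟩
    by_cases hxW : x ∈ W
    · have hle : (W.filter (fun y => y ≠ x ∧ G.Adj x y)).card ≤
          (V.filter (fun y => G.Adj x y)).card :=
        card_le_card fun z hz ↦ by
          simp only [mem_filter] at hz ⊢
          exact ⟨(mem_insert.mp (hWV hz.1)).resolve_left hz.2.1, hz.2.2⟩
      have := hW x hxW
      simp only [Function.update_self] at this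
      omega
    · have hWV' : W ⊆ V := fun z hz ↦
        (mem_insert.mp (hWV hz)).resolve_left (ne_of_mem_of_not_mem hz hxW)
      exact hfsc ⟨W, hWV', hWne, fun u hu ↦ hupd u (hWV' hu) ▸ hW u hu⟩
  · rw [Function.update_of_ne (ne_of_mem_of_not_mem (mem_insert_self x V) hy).symm]
    exact hpad y fun h ↦ hy (mem_insert_of_mem h)

lemma bijOn_update_one (hx : x ∉ V) (hnb : (V.filter (fun y => G.Adj x y)).card < 3) :
    Set.BijOn (fun ζ ↦ Function.update ζ x 1)
      {ζ | AllowedExt G (insert x V) ζ ∧ ζ x = 3} {η | AllowedExt G V η} := by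
  refine ⟨fun ζ hζ ↦ allowedExt_update_one hx hζ.1, fun ζ hζ ζ' hζ' h ↦ ?_, fun η hη ↦ ?_⟩
  · rw [← Function.update_eq_self x ζ, ← Function.update_eq_self x ζ', hζ.2, hζ'.2]
    simpa using congrArg (Function.update · x 3) h
  · refine ⟨Function.update η x 3, ⟨allowedExt_update_three hx hnb hη, by simp⟩, ?_⟩
    simp [← hη.2 x hx]

end Configurations

section Expectation

lemma expectOn_eq_of_bijOn {T U : Type*} {A : Set (T → ℕ)} {B : Set (U → ℕ)}
    {f : (T → ℕ) → ℝ} {g : (U → ℕ) → ℝ} (e : (T → ℕ) → (U → ℕ)) (he : A.BijOn e B)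
    (hfg : ∀ a ∈ A, f a = g (e a)) : expectOn A f = expectOn B g := by
  rw [expectOn, expectOn, finsum_mem_eq_of_bijOn e he hfg, he.ncard_eq]

lemma finsum_mem_mul_ite_eq {α : Type*} {A : Set α} (hA : A.Finite) (p : α → Prop)
    [DecidablePred p] (f : α → ℝ) :
    ∑ᶠ a ∈ A, f a * (if p a then 1 else 0) = ∑ᶠ a ∈ A ∩ {a | p a}, f a := by
  rw [← finsum_mem_inter_add_sdiff {a | p a} hA,
    finsum_mem_of_eqOn_zero (s := A \ {a | p a}) fun a ha ↦ by simp [show ¬p a from ha.2],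
    add_zero]
  exact finsum_mem_congr rfl fun a ha ↦ by simp [show p a from ha.2]

lemma truncated_correlation_div_eq {T : Type*} {A : Set (T → ℕ)} (hA : A.Finite)
    (p : (T → ℕ) → Prop) [DecidablePred p] (hp : (A ∩ {a | p a}).Nonempty)
    (f : (T → ℕ) → ℝ) :
    |expectOn A (fun a ↦ f a * if p a then 1 else 0) -
        expectOn A f * ((A ∩ {a | p a}).ncard / A.ncard)| /
      ((A ∩ {a | p a}).ncard / A.ncard) = |expectOn A f - expectOn (A ∩ {a | p a}) f| := by
  have hn : (0 : ℝ) < (A ∩ {a | p a}).ncard :=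
    mod_cast (Set.ncard_pos (hA.inter_of_left _)).mpr hp
  have hN : (0 : ℝ) < A.ncard :=
    hn.trans_le (mod_cast Set.ncard_le_ncard Set.inter_subset_left hA)
  have hprob : (0 : ℝ) < (A ∩ {a | p a}).ncard / A.ncard := div_pos hn hN
  rw [abs_sub_comm (expectOn A f)]
  simp only [expectOn, finsum_mem_mul_ite_eq hA]
  rw [← abs_of_pos hprob, ← abs_div, abs_of_pos hprob]
  congr 1
  field_simp

end Expectation

theorem expect_diff_le_truncated_correlation_general (G : SimpleGraph S) [DecidableRel G.Adj]
    (hG : IsBinaryTree G) (V : Finset S)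
    (x : S) (hx : x ∉ V) (hnb : (V.filter (fun y => G.Adj x y)).card = 1)
    (f : (S → ℕ) → ℝ) (hf : ∀ η ζ : S → ℕ, (∀ v ∈ V, η v = ζ v) → f η = f ζ) :
    |expectOn {ζ | AllowedExt G (insert x V) ζ} f -
        expectOn {η | AllowedExt G V η} f| ≤
      |expectOn {ζ | AllowedExt G (insert x V) ζ}
            (fun ζ => f ζ * (if ζ x = 3 then (1 : ℝ) else 0)) -
          expectOn {ζ | AllowedExt G (insert x V) ζ} f *
            (({ζ | AllowedExt G (insert x V) ζ ∧ ζ x = 3}.ncard : ℝ) /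
              ({ζ | AllowedExt G (insert x V) ζ}.ncard : ℝ))| /
        (({ζ | AllowedExt G (insert x V) ζ ∧ ζ x = 3}.ncard : ℝ) /
          ({ζ | AllowedExt G (insert x V) ζ}.ncard : ℝ)) := by
  have hcond : expectOn {η | AllowedExt G V η} f =
      expectOn {ζ | AllowedExt G (insert x V) ζ ∧ ζ x = 3} f :=
    (expectOn_eq_of_bijOn _ (bijOn_update_one hx (by omega)) fun ζ _ ↦
      hf _ _ fun v hv ↦ (Function.update_of_ne (ne_of_mem_of_not_mem hv hx) _ _).symm).symm
  have hthree : AllowedExt G (insert x V) (fun y => if y ∈ insert x V then 3 else 1) :=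
    allowedExt_three G hG.2.1 _
  rw [hcond]
  exact (truncated_correlation_div_eq (finite_setOf_allowedExt G _) (fun ζ ↦ ζ x = 3)
    ⟨_, hthree, by simp⟩ f).ge

/-- Adding one new vertex `x` with exactly one neighbour in `V`: the difference of
expectations of a local function `f` under the uniform measures on `𝒜_{V∪{x}}` and
`𝒜_V` is bounded by the truncated correlation of `f` with the event `{ζ x = 3}`
divided by the probability of that event. -/
theorem expect_diff_le_truncated_correlation (G : SimpleGraph S) [DecidableRel G.Adj]
    (hG : IsBinaryTree G) (V : Finset S) (hV : V.Nonempty)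
    (x : S) (hx : x ∉ V) (hnb : (V.filter (fun y => G.Adj x y)).card = 1)
    (f : (S → ℕ) → ℝ) (hf : ∀ η ζ : S → ℕ, (∀ v ∈ V, η v = ζ v) → f η = f ζ) :
    |expectOn {ζ | AllowedExt G (insert x V) ζ} f -
        expectOn {η | AllowedExt G V η} f| ≤
      |expectOn {ζ | AllowedExt G (insert x V) ζ}
            (fun ζ => f ζ * (if ζ x = 3 then (1 : ℝ) else 0)) -
          expectOn {ζ | AllowedExt G (insert x V) ζ} f *
            (({ζ | AllowedExt G (insert x V) ζ ∧ ζ x = 3}.ncard : ℝ) /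
              ({ζ | AllowedExt G (insert x V) ζ}.ncard : ℝ))| /
        (({ζ | AllowedExt G (insert x V) ζ ∧ ζ x = 3}.ncard : ℝ) /
          ({ζ | AllowedExt G (insert x V) ζ}.ncard : ℝ)) :=
  expect_diff_le_truncated_correlation_general G hG V x hx hnb f hf
end

section
/- The set R of infinite-volume allowed configurations on the rootless binary tree has empty interior in the product space Ω = {1,2,3}^S. -/
open Finset

variable {S : Type*} [DecidableEq S]

/-- A configuration `η : S → Fin 3` (site `x` having height `(η x : ℕ) + 1 ∈ {1,2,3}`)
contains a forbidden subconfiguration in the finite volume `V`: there is a nonempty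
`W ⊆ V` such that every `x ∈ W` has height at most the number of its neighbours
in `W`. -/
def HasFSC3 (G : SimpleGraph S) [DecidableRel G.Adj] (V : Finset S)
    (η : S → Fin 3) : Prop :=
  ∃ W : Finset S, W ⊆ V ∧ W.Nonempty ∧
    ∀ x ∈ W, (η x : ℕ) + 1 ≤ (W.filter (fun y => y ≠ x ∧ G.Adj x y)).card

/-- The set `R` of infinite-volume allowed configurations in `Ω = {1,2,3}^S`:
those whose restriction to every finite volume is allowed. -/
def RecSet (G : SimpleGraph S) [DecidableRel G.Adj] : Set (S → Fin 3) :=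
  {η | ∀ V : Finset S, V.Nonempty → ¬ HasFSC3 G V η}

lemma nbr_finite (G : SimpleGraph S) (hG : IsBinaryTree G) (v : S) :
    {w : S | G.Adj v w}.Finite := by
  by_contra h
  have h2 := Set.Infinite.ncard h
  rw [hG.2.2 v] at h2
  omega

lemma binaryTree_infinite (G : SimpleGraph S) [DecidableRel G.Adj]
    (hG : IsBinaryTree G) : Infinite S := by
  by_contra h
  haveI : Fintype S := fintypeOfNotInfinite h
  have htree : G.IsTree := ⟨hG.1, hG.2.1⟩
  have hcard := htree.card_edgeFinset
  have hsum := G.sum_degrees_eq_twice_card_edges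
  have hdeg : ∀ v : S, G.degree v = 3 := by
    intro v
    have h3 : (G.neighborSet v).ncard = 3 := hG.2.2 v
    rw [← SimpleGraph.card_neighborSet_eq_degree, ← Nat.card_eq_fintype_card,
      Nat.card_coe_set_eq]
    exact h3
  rw [Finset.sum_congr rfl (fun v _ => hdeg v)] at hsum
  simp only [Finset.sum_const, smul_eq_mul, Finset.card_univ] at hsum
  have hne : 1 ≤ Fintype.card S := Fintype.card_pos_iff.mpr hG.1.nonempty
  omega

lemma exists_edge_avoid (G : SimpleGraph S) [DecidableRel G.Adj]
    (hG : IsBinaryTree G) (F : Finset S) :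
    ∃ x y : S, G.Adj x y ∧ x ∉ F ∧ y ∉ F := by
  haveI := binaryTree_infinite G hG
  by_contra h
  push_neg at h
  have hsub : (Set.univ : Set S) ⊆ ↑F ∪ ⋃ f ∈ F, {w : S | G.Adj f w} := by
    intro v _
    by_cases hv : v ∈ F
    · exact Or.inl hv
    · have hnb : {w : S | G.Adj v w}.Nonempty := by
        rw [← Set.ncard_pos (nbr_finite G hG v), hG.2.2 v]; omega
      obtain ⟨w, hw⟩ := hnb
      have hwF : w ∈ F := h v w hw hv
      refine Or.inr (Set.mem_biUnion hwF ?_)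
      exact hw.symm
  have hfin : ((↑F : Set S) ∪ ⋃ f ∈ F, {w : S | G.Adj f w}).Finite :=
    (F.finite_toSet).union (Set.Finite.biUnion F.finite_toSet fun f _ => nbr_finite G hG f)
  have : (Set.univ : Set S).Finite := hfin.subset hsub
  exact Set.infinite_univ this

/-- The set `R` of infinite-volume allowed configurations has empty interior in
the product space `Ω = {1,2,3}^S`. -/
theorem recSet_interior_empty (G : SimpleGraph S) [DecidableRel G.Adj]
    (hG : IsBinaryTree G) :
    interior (RecSet G) = ∅ := by
  by_contra h
  obtain ⟨η, hη⟩ := Set.nonempty_iff_ne_empty.mpr h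
  obtain ⟨I, u, hu, hsub⟩ := (isOpen_pi_iff.mp isOpen_interior) η hη
  obtain ⟨x, y, hadj, hx, hy⟩ := exists_edge_avoid G hG I
  set η' : S → Fin 3 := fun z => if z = x ∨ z = y then 0 else η z with hη'
  have hmem : η' ∈ (↑I : Set S).pi u := by
    intro a ha
    have hax : a ≠ x := fun h => hx (h ▸ ha)
    have hay : a ≠ y := fun h => hy (h ▸ ha)
    have : η' a = η a := by simp [hη', hax, hay]
    rw [this]
    exact (hu a ha).2
  have hR : η' ∈ RecSet G := interior_subset (hsub hmem)
  have hxy : x ≠ y := hadj.ne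
  apply hR {x, y} ⟨x, by simp⟩
  refine ⟨{x, y}, le_refl _, ⟨x, by simp⟩, ?_⟩
  intro z hz
  have hzval : η' z = 0 := by
    simp only [Finset.mem_insert, Finset.mem_singleton] at hz
    simp [hη', hz]
  rw [hzval]
  simp only [Fin.val_zero, zero_add]
  apply Finset.card_pos.mpr
  simp only [Finset.mem_insert, Finset.mem_singleton] at hz
  rcases hz with rfl | rfl
  · exact ⟨y, by simp [Finset.mem_filter, hxy.symm, hadj]⟩
  · exact ⟨x, by simp [Finset.mem_filter, hxy, hadj.symm]⟩
end

section
/- The set R of infinite-volume allowed configurations on the rootless binary tree is a perfect uncountable set: R is uncountable, and for every η ∈ R there exists a sequence η_n ∈ R with η_n ≠ η for all n and η_n → η in the product topology. -/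
open Finset

variable {S : Type*} [DecidableEq S]

/-!
Both halves rest on the forest bound: a finite nonempty set `W` of vertices of an acyclic graph
spans fewer than `#W` edges, so `∑ x ∈ W, deg_W x + 2 ≤ 2 * #W`. Consequently every configuration
with all heights at least 2 is allowed, which embeds `Set S` into `R`; and `S` is infinite,
being acyclic with all degrees 3, so `R` is uncountable.

For perfectness, an `η ∈ R` with infinitely many sites of height below 3 is the limit of the
configurations obtained by raising one such site to 3. Otherwise the set `A` of these sites is
finite, and lowering a site `c` of height 3 to 2 keeps `η` allowed as soon as every walk from `c`
to `A` has length at least `2 * #A`: a forbidden set must contain `c`, its component through `c`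
is again forbidden, and by the forest bound that component contains a site of height 1 and has
at most `2 * #A` sites. As the tree is locally finite, all but finitely many sites `c` qualify.
-/

open Filter Topology

namespace SimpleGraph

variable {V : Type*} {G : SimpleGraph V}

lemma IsAcyclic.card_edgeFinset_lt [Fintype V] [Nonempty V] {H : SimpleGraph V}
    [Fintype H.edgeSet] (hH : H.IsAcyclic) : #H.edgeFinset < Fintype.card V := by
  classical
  obtain ⟨T, hHT, -, hT⟩ := connected_top.exists_isTree_le_of_le_of_isAcyclic le_top hH
  calc #H.edgeFinset ≤ #T.edgeFinset := card_le_card (edgeFinset_mono hHT)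
    _ < Fintype.card V := by rw [← hT.card_edgeFinset]; omega

lemma degree_induce_coe_finset [DecidableRel G.Adj] {W : Finset V} (x : (W : Set V)) :
    (G.induce (W : Set V)).degree x = #{y ∈ W | G.Adj x y} := by
  rw [← card_neighborFinset_eq_degree, ← card_map (Function.Embedding.subtype _)]
  congr 1
  ext y
  simp [and_comm]

lemma IsAcyclic.sum_card_adj_add_two_le [DecidableRel G.Adj] (hG : G.IsAcyclic) {W : Finset V}
    (hW : W.Nonempty) : ∑ x ∈ W, #{y ∈ W | G.Adj x y} + 2 ≤ 2 * #W := by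
  classical
  have : Nonempty (W : Set V) := hW.coe_sort
  have hlt := (hG.induce (W : Set V)).card_edgeFinset_lt
  have hsum := (G.induce (W : Set V)).sum_degrees_eq_twice_card_edges
  simp only [degree_induce_coe_finset] at hsum
  have hW' : ∑ x ∈ W, #{y ∈ W | G.Adj x y} = 2 * #(G.induce (W : Set V)).edgeFinset := by
    rw [← hsum, ← sum_coe_sort]; rfl
  simp only [SetLike.coe_sort_coe, Fintype.card_coe] at hlt
  omega

lemma IsAcyclic.infinite [Nonempty V] (hG : G.IsAcyclic) (h : ∀ v, 2 ≤ {w | G.Adj v w}.ncard) :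
    Infinite V := by
  classical
  by_contra hinf
  have : Finite V := not_infinite_iff_finite.1 hinf
  have := Fintype.ofFinite V
  have hsum := hG.sum_card_adj_add_two_le (W := univ) univ_nonempty
  have hdeg : #(univ : Finset V) • 2 ≤ ∑ v, #{w | G.Adj v w} :=
    card_nsmul_le_sum _ _ _ fun v _ => by
      rw [← Set.toFinset_ofPred, ← Set.ncard_eq_toFinset_card']; exact h v
  rw [smul_eq_mul] at hdeg
  omega

open Classical in
noncomputable def componentIn (G : SimpleGraph V) (W : Finset V) (c : V) : Finset V :=
  {x ∈ W | ∃ p : G.Walk c x, ∀ y ∈ p.support, y ∈ W}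

variable {W : Finset V} {c x y : V}

lemma mem_componentIn : x ∈ G.componentIn W c ↔ ∃ p : G.Walk c x, ∀ y ∈ p.support, y ∈ W := by
  classical
  simp only [componentIn, mem_filter, and_iff_right_iff_imp]
  exact fun ⟨p, hp⟩ => hp x p.end_mem_support

lemma componentIn_subset : G.componentIn W c ⊆ W := fun x hx =>
  have ⟨p, hp⟩ := mem_componentIn.1 hx
  hp x p.end_mem_support

lemma mem_componentIn_self (hc : c ∈ W) : c ∈ G.componentIn W c :=
  mem_componentIn.2 ⟨.nil, by simpa⟩

lemma mem_componentIn_of_adj (hx : x ∈ G.componentIn W c) (hy : y ∈ W) (hxy : G.Adj x y) :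
    y ∈ G.componentIn W c := by
  obtain ⟨p, hp⟩ := mem_componentIn.1 hx
  refine mem_componentIn.2 ⟨p.concat hxy, fun z hz => ?_⟩
  rw [Walk.support_concat, List.mem_append, List.mem_singleton] at hz
  rcases hz with hz | rfl
  exacts [hp z hz, hy]

lemma filter_adj_componentIn [DecidableRel G.Adj] (hx : x ∈ G.componentIn W c) :
    {y ∈ G.componentIn W c | G.Adj x y} = {y ∈ W | G.Adj x y} := by
  ext y
  simp only [mem_filter]
  exact ⟨fun h => ⟨componentIn_subset h.1, h.2⟩, fun h => ⟨mem_componentIn_of_adj hx h.1 h.2, h.2⟩⟩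

lemma exists_walk_length_lt_card_componentIn (hx : x ∈ G.componentIn W c) :
    ∃ p : G.Walk c x, p.length < #(G.componentIn W c) := by
  classical
  obtain ⟨q, hq⟩ := mem_componentIn.1 hx
  have hqC : ∀ z ∈ q.support, z ∈ G.componentIn W c := fun z hz =>
    mem_componentIn.2 ⟨q.takeUntil z hz,
      fun y hy => hq y (q.support_takeUntil_subset_support hz hy)⟩
  refine ⟨q.bypass, ?_⟩
  have hsub : q.bypass.support.toFinset ⊆ G.componentIn W c := fun z hz =>
    hqC z (q.support_bypass_subset_support (List.mem_toFinset.1 hz))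
  have := card_le_card hsub
  rw [List.toFinset_card_of_nodup q.bypass_isPath.support_nodup, Walk.length_support] at this
  omega

lemma finite_setOf_exists_walk_length_lt (hG : ∀ v, (G.neighborSet v).Finite) (a : V) (n : ℕ) :
    {x | ∃ p : G.Walk x a, p.length < n}.Finite := by
  induction n with
  | zero => simp
  | succ n ih =>
    refine ((Set.finite_singleton a).union (ih.biUnion fun y _ => hG y)).subset ?_
    rintro x ⟨_ | ⟨hxy, q⟩, hp⟩
    · exact Or.inl rfl
    · exact Or.inr (Set.mem_biUnion ⟨q, by simpa using hp⟩ hxy.symm)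

end SimpleGraph

theorem uncountable_set (α : Type*) [Infinite α] : Uncountable (Set α) := by
  rw [← not_countable_iff, ← Cardinal.mk_le_aleph0_iff, Cardinal.mk_set, not_le]
  exact (Cardinal.aleph0_le_mk α).trans_lt (Cardinal.cantor _)

theorem Set.Infinite.exists_seq_update_tendsto {ι X : Type*} [DecidableEq ι] [TopologicalSpace X]
    {s : Set ι} (hs : s.Infinite) (f : ι → X) (b : X) :
    ∃ c : ℕ → ι, (∀ n, c n ∈ s) ∧ Tendsto (fun n => Function.update f (c n) b) atTop (𝓝 f) := by
  have hc : Function.Injective fun n => (hs.natEmbedding s n : ι) :=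
    Subtype.val_injective.comp (hs.natEmbedding s).injective
  refine ⟨_, fun n => (hs.natEmbedding s n).2, tendsto_pi_nhds.2 fun x => ?_⟩
  have hne : ∀ᶠ n in atTop, (hs.natEmbedding s n : ι) ≠ x := by
    rw [← Nat.cofinite_eq_atTop]
    exact hc.tendsto_cofinite.eventually (eventually_cofinite_ne x)
  exact tendsto_const_nhds.congr' (hne.mono fun n hn => (Function.update_of_ne hn.symm _ _).symm)

section Configurations

variable {V : Type*} {G : SimpleGraph V} [DecidableRel G.Adj]

def IsForbidden (G : SimpleGraph V) [DecidableRel G.Adj] (η : V → Fin 3) (W : Finset V) : Prop :=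
  ∀ x ∈ W, (η x : ℕ) + 1 ≤ #{y ∈ W | G.Adj x y}

variable {η : V → Fin 3} {W : Finset V}

lemma IsForbidden.componentIn (h : IsForbidden G η W) (c : V) :
    IsForbidden G η (G.componentIn W c) := fun x hx => by
  rw [SimpleGraph.filter_adj_componentIn hx]
  exact h x (SimpleGraph.componentIn_subset hx)

lemma IsForbidden.sum_add_two_le (hG : G.IsAcyclic) (h : IsForbidden G η W) (hW : W.Nonempty) :
    ∑ x ∈ W, ((η x : ℕ) + 1) + 2 ≤ 2 * #W :=
  (add_le_add_left (sum_le_sum h) 2).trans (hG.sum_card_adj_add_two_le hW)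

lemma IsForbidden.exists_eq_zero (hG : G.IsAcyclic) (h : IsForbidden G η W) (hW : W.Nonempty) :
    ∃ a ∈ W, η a = 0 := by
  by_contra! hne
  have hsum : #W • 2 ≤ ∑ x ∈ W, ((η x : ℕ) + 1) :=
    card_nsmul_le_sum _ _ _ fun x hx => by
      have := Fin.pos_iff_ne_zero.2 (hne x hx)
      omega
  have := h.sum_add_two_le hG hW
  rw [smul_eq_mul] at hsum
  omega

lemma IsForbidden.card_add_two_le (hG : G.IsAcyclic) (h : IsForbidden G η W) (hW : W.Nonempty) :
    #W + 2 ≤ 2 * #{x ∈ W | η x ≠ 2} := by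
  have hsplit := sum_filter_add_sum_filter_not W (fun x => η x ≠ 2) (fun x => (η x : ℕ) + 1)
  have hlow : #{x ∈ W | η x ≠ 2} ≤ ∑ x ∈ W with η x ≠ 2, ((η x : ℕ) + 1) := by
    rw [card_eq_sum_ones]
    exact sum_le_sum fun _ _ => by omega
  have hhigh : ∑ x ∈ W with ¬η x ≠ 2, ((η x : ℕ) + 1) = 3 * #{x ∈ W | ¬η x ≠ 2} := by
    rw [mul_comm, ← smul_eq_mul, ← sum_const]
    exact sum_congr rfl fun x hx => by simp [not_not.1 (mem_filter.1 hx).2]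
  have := card_filter_add_card_filter_not (s := W) (fun x => η x ≠ 2)
  have := h.sum_add_two_le hG hW
  omega

variable [DecidableEq V]

lemma mem_recSet_iff : η ∈ RecSet G ↔ ∀ W : Finset V, W.Nonempty → ¬IsForbidden G η W := by
  have hfilter : ∀ (W : Finset V) (x : V),
      {y ∈ W | y ≠ x ∧ G.Adj x y} = {y ∈ W | G.Adj x y} := fun W x =>
    filter_congr fun y _ => and_iff_right_of_imp fun h => h.ne'
  simp only [RecSet, HasFSC3, hfilter, Set.mem_ofPred_eq]
  refine ⟨fun h W hW hF => h W hW ⟨W, subset_rfl, hW, hF⟩, ?_⟩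
  rintro h U - ⟨W, -, hW, hF⟩
  exact h W hW hF

lemma mem_recSet_of_forall_ne_zero (hG : G.IsAcyclic) (hη : ∀ x, η x ≠ 0) : η ∈ RecSet G :=
  mem_recSet_iff.2 fun _ hW hF =>
    have ⟨a, _, ha⟩ := hF.exists_eq_zero hG hW
    hη a ha

lemma mem_recSet_of_le {η' : V → Fin 3} (hη : η ∈ RecSet G) (hle : η ≤ η') : η' ∈ RecSet G :=
  mem_recSet_iff.2 fun W hW hF =>
    mem_recSet_iff.1 hη W hW fun x hx => le_trans (by simpa using hle x) (hF x hx)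

lemma update_two_mem_recSet (hη : η ∈ RecSet G) (c : V) : Function.update η c 2 ∈ RecSet G :=
  mem_recSet_of_le hη fun x => by
    rcases eq_or_ne x c with rfl | hx
    · simpa using Fin.le_last (η x)
    · simp [hx]

lemma update_one_mem_recSet (hG : G.IsAcyclic) (hη : η ∈ RecSet G)
    {A : Finset V} (hA : ∀ x, η x ≠ 2 → x ∈ A) {c : V}
    (hc : ∀ a ∈ A, ∀ p : G.Walk c a, 2 * #A ≤ p.length) :
    Function.update η c 1 ∈ RecSet G := by
  refine mem_recSet_iff.2 fun W hW hF => ?_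
  by_cases hcW : c ∈ W
  · set C := G.componentIn W c
    have hC : C.Nonempty := ⟨c, SimpleGraph.mem_componentIn_self hcW⟩
    have hFC := hF.componentIn c
    obtain ⟨a, haC, ha⟩ := hFC.exists_eq_zero hG hC
    have hac : a ≠ c := by rintro rfl; simp at ha
    have haA : a ∈ A := hA a (by simp_all)
    have hlow : {x ∈ C | Function.update η c 1 x ≠ 2} ⊆ insert c A := fun x hx => by
      rcases eq_or_ne x c with rfl | hxc
      · exact mem_insert_self _ _
      · exact mem_insert_of_mem (hA x (by simpa [hxc] using (mem_filter.1 hx).2))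
    have hcard := (hFC.card_add_two_le hG hC).trans
      (Nat.mul_le_mul_left 2 ((card_le_card hlow).trans (card_insert_le c A)))
    obtain ⟨p, hp⟩ := SimpleGraph.exists_walk_length_lt_card_componentIn haC
    have := hc a haA p
    omega
  · refine mem_recSet_iff.1 hη W hW fun x hx => ?_
    have hxc : x ≠ c := fun h => hcW (h ▸ hx)
    simpa [hxc] using hF x hx

lemma not_countable_recSet [Infinite V] (hG : G.IsAcyclic) : ¬(RecSet G).Countable := by
  classical
  intro hR
  let g : Set V → V → Fin 3 := fun A x => if x ∈ A then 1 else 2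
  have hg : Function.Injective g := fun A B hAB => Set.ext fun x => by
    have := congrFun hAB x
    simp only [g] at this
    split_ifs at this <;> simp_all
  have hgR : Set.MapsTo g Set.univ (RecSet G) := fun A _ =>
    mem_recSet_of_forall_ne_zero hG fun x => by simp only [g]; split_ifs <;> decide
  exact (uncountable_set V).not_countable
    (Set.countable_univ_iff.1 (hgR.countable_of_injOn hg.injOn hR))

lemma exists_infinite_update_mem_recSet [Infinite V] (hG : G.IsAcyclic)
    (hfin : ∀ v, (G.neighborSet v).Finite) (hη : η ∈ RecSet G) :
    ∃ s : Set V, s.Infinite ∧ ∃ b : Fin 3, ∀ x ∈ s,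
      Function.update η x b ∈ RecSet G ∧ Function.update η x b ≠ η := by
  by_cases hinf : {x | η x ≠ 2}.Infinite
  · refine ⟨_, hinf, 2, fun x hx => ⟨update_two_mem_recSet hη x, fun h => hx ?_⟩⟩
    rw [← h, Function.update_self]
  set A := (Set.not_infinite.1 hinf).toFinset
  have hA : ∀ x, η x ≠ 2 → x ∈ A := fun x hx => by simpa [A] using hx
  let far : Set V := {c | ∀ a ∈ A, ∀ p : G.Walk c a, 2 * #A ≤ p.length}
  have hfar : far.Infinite := by
    refine Set.infinite_of_finite_compl ((A.finite_toSet.biUnion fun a _ =>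
      SimpleGraph.finite_setOf_exists_walk_length_lt hfin a (2 * #A)).subset fun c hc => ?_)
    simp only [far, Set.mem_compl_iff, Set.mem_ofPred_eq, not_forall, not_le] at hc
    obtain ⟨a, ha, p, hp⟩ := hc
    exact Set.mem_biUnion ha ⟨p, hp⟩
  refine ⟨far, hfar, 1, fun c hc => ⟨update_one_mem_recSet hG hη hA hc, fun h => ?_⟩⟩
  have hcA : c ∉ A := fun hcA => by
    have : 2 * #A ≤ 0 := hc c hcA .nil
    have := card_pos.2 ⟨c, hcA⟩
    omega
  have := congrFun h c
  rw [Function.update_self] at this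
  exact hcA (hA c (this ▸ by decide))

end Configurations

/-- The set `R` of infinite-volume allowed configurations is a perfect uncountable
set: it is uncountable, and every `η ∈ R` is the limit of a sequence of elements
of `R` distinct from `η`. -/
theorem recSet_uncountable_perfect (G : SimpleGraph S) [DecidableRel G.Adj]
    (hG : IsBinaryTree G) :
    ¬ (RecSet G).Countable ∧
    ∀ η ∈ RecSet G, ∃ seq : ℕ → (S → Fin 3),
      (∀ n : ℕ, seq n ∈ RecSet G ∧ seq n ≠ η) ∧
      Filter.Tendsto seq Filter.atTop (nhds η) := by
  obtain ⟨hconn, hac, hdeg⟩ := hG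
  have : Nonempty S := hconn.nonempty
  have : Infinite S := hac.infinite fun v => by rw [hdeg v]; decide
  have hfin : ∀ v, (G.neighborSet v).Finite := fun v =>
    Set.finite_of_ncard_ne_zero (s := {w | G.Adj v w}) (by rw [hdeg v]; decide)
  refine ⟨not_countable_recSet hac, fun η hη => ?_⟩
  obtain ⟨s, hs, b, hsb⟩ := exists_infinite_update_mem_recSet hac hfin hη
  obtain ⟨c, hcs, hlim⟩ := hs.exists_seq_update_tendsto η b
  exact ⟨_, fun n => hsb _ (hcs n), hlim⟩
end

section
/- Commutation of infinite-volume addition operators on normal configurations: let η ∈ {1,2,3}^S and x, y ∈ S, and suppose that η, a_yη and a_xη are all normal configurations. Then a_x(a_yη) = a_y(a_xη). -/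
open Finset

variable {S : Type*} [DecidableEq S]

/-- `η` is a normal configuration: adding a grain at any `x` only affects a finite
region, i.e. `a_{x,V}η` is eventually independent of the volume `V`. -/
def NormalCfg (G : SimpleGraph S) [DecidableRel G.Adj] (η : S → ℕ) : Prop :=
  ∀ x : S, ∃ Vx : Finset S, x ∈ Vx ∧
    ∀ V V' : Finset S, Vx ⊆ V → V ⊆ V' → addOp G V' x η = addOp G V x η

open scoped Classical in
/-- The infinite-volume addition operator `a_x`, defined on normal configurations
as the common value of `a_{x,V}` for all large volumes `V`. -/
noncomputable def addInf (G : SimpleGraph S) [DecidableRel G.Adj]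
    (x : S) (η : S → ℕ) : S → ℕ :=
  if h : ∃ Vx : Finset S, x ∈ Vx ∧
      ∀ V V' : Finset S, Vx ⊆ V → V ⊆ V' → addOp G V' x η = addOp G V x η
  then addOp G h.choose x η else η

/-! In a finite volume `V` every legal toppling keeps the mass in `V` from growing (each site has
three neighbours) and a toppling next to the outside loses a grain; as every site of `V` is joined
to the outside, toppling counts are bounded along paths to the boundary and stabilization exists.
By the least action principle a stabilizing sequence topples each site at least as often as any
legal sequence, so stabilization is unique, and `a_{x,V} a_{y,V} η` is the stabilization of `η`
with grains added at `x` and `y`: the finite-volume operators commute. Normality of `η`, `a_x η`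
and `a_y η` lets one volume `V` realise all four infinite-volume operators at once. -/

section Toppling

variable {G : SimpleGraph S} [DecidableRel G.Adj] {V : Finset S}

theorem applySeq_append (η : S → ℕ) (L M : List S) :
    applySeq G V η (L ++ M) = applySeq G V (applySeq G V η L) M := by
  induction L generalizing η with
  | nil => rfl
  | cons w L ih => exact ih _

theorem legalSeq_append {η : S → ℕ} {L M : List S} :
    LegalSeq G V η (L ++ M) ↔ LegalSeq G V η L ∧ LegalSeq G V (applySeq G V η L) M := by
  induction L generalizing η with
  | nil => simp [LegalSeq, applySeq]
  | cons w L ih => simp only [List.cons_append, LegalSeq, applySeq, ih, and_assoc]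

theorem LegalSeq.mem {η : S → ℕ} {L : List S} (hL : LegalSeq G V η L) {z : S} (hz : z ∈ L) :
    z ∈ V := by
  induction L generalizing η with
  | nil => simp at hz
  | cons w L ih =>
    obtain rfl | hz := List.mem_cons.1 hz
    exacts [hL.1, ih hL.2.2 hz]

/-- The odometer identity; legality keeps the truncated subtraction in `toppleAt` exact. -/
theorem LegalSeq.applySeq_add_count {η : S → ℕ} {L : List S} (hL : LegalSeq G V η L) (z : S) :
    applySeq G V η L z + 3 * L.count z =
      η z + if z ∈ V then L.countP (G.Adj · z) else 0 := by
  induction L generalizing η with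
  | nil => simp [applySeq]
  | cons w L ih =>
    obtain ⟨hwV, hw, hL⟩ := hL
    have := ih hL
    simp only [applySeq, List.count_cons, List.countP_cons]
    generalize applySeq G V (toppleAt G V η w) L z = a at this ⊢
    simp only [toppleAt, beq_iff_eq] at this ⊢
    by_cases hzw : z = w
    · subst hzw; simp_all; omega
    · split_ifs at * <;> simp_all; omega

theorem LegalSeq.applySeq_eq_of_perm {η : S → ℕ} {L M : List S} (hL : LegalSeq G V η L)
    (hM : LegalSeq G V η M) (h : L.Perm M) : applySeq G V η L = applySeq G V η M := by
  funext z
  have hLz := hL.applySeq_add_count z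
  have hMz := hM.applySeq_add_count z
  rw [h.count_eq, h.countP_eq] at hLz
  omega

/-- The least action principle: a toppling of `M` at `x` beyond the count of `x` in `L` would
find `x` no higher than in the stable configuration reached by `L`. -/
theorem LegalSeq.le_of_stable {η : S → ℕ} {L M : List S} (hL : LegalSeq G V η L)
    (hst : Stable V (applySeq G V η L)) (hM : LegalSeq G V η M) :
    (M : Multiset S) ≤ L := by
  induction M using List.reverseRecOn with
  | nil => exact Multiset.zero_le _
  | append_singleton M x ih =>
    obtain ⟨hM', hxV, hx, -⟩ := legalSeq_append.1 hM
    have hle := ih hM'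
    have hadj : M.countP (G.Adj · x) ≤ L.countP (G.Adj · x) := by
      simpa using Multiset.countP_le_of_le (G.Adj · x) hle
    rw [Multiset.le_iff_count] at hle ⊢
    intro z
    simp only [Multiset.coe_count, List.count_append, List.count_singleton] at hle ⊢
    by_cases hzx : z = x
    · subst hzx
      have hMz := hM'.applySeq_add_count z
      have hLz := hL.applySeq_add_count z
      rw [if_pos hxV] at hMz hLz
      have := hst z hxV
      have := hle z
      simp only [beq_self_eq_true, if_true]
      omega
    · simpa [Ne.symm hzx] using hle z

theorem Stabilizes.unique {η ζ ξ : S → ℕ} (hζ : Stabilizes G V η ζ)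
    (hξ : Stabilizes G V η ξ) : ζ = ξ := by
  obtain ⟨L, hL, rfl, hLst⟩ := hζ
  obtain ⟨M, hM, rfl, hMst⟩ := hξ
  have hperm : L.Perm M :=
    Multiset.coe_eq_coe.1 ((hM.le_of_stable hMst hL).antisymm (hL.le_of_stable hLst hM))
  exact hL.applySeq_eq_of_perm hM hperm

theorem Stabilizes.stabilize_eq {η ζ : S → ℕ} (h : Stabilizes G V η ζ) :
    stabilize G V η = ζ := by
  have hex : ∃ ζ, Stabilizes G V η ζ := ⟨ζ, h⟩
  rw [stabilize, dif_pos hex]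
  exact hex.choose_spec.unique h

theorem addGrain_comm (x y : S) (η : S → ℕ) :
    addGrain x (addGrain y η) = addGrain y (addGrain x η) := by
  funext z
  simp only [addGrain, Function.update_apply]
  split_ifs <;> subst_vars <;> simp_all

theorem le_addGrain_apply (x : S) (η : S → ℕ) (z : S) : η z ≤ addGrain x η z := by
  rcases eq_or_ne z x with rfl | h <;> simp [addGrain, *]

theorem toppleAt_addGrain {η : S → ℕ} (x : S) {w : S} (hw : 3 ≤ η w) :
    toppleAt G V (addGrain x η) w = addGrain x (toppleAt G V η w) := by
  funext z
  simp only [toppleAt, addGrain, Function.update_apply]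
  split_ifs <;> subst_vars <;> simp_all; omega

theorem LegalSeq.legalSeq_addGrain {η : S → ℕ} {L : List S} (hL : LegalSeq G V η L) (x : S) :
    LegalSeq G V (addGrain x η) L ∧
      applySeq G V (addGrain x η) L = addGrain x (applySeq G V η L) := by
  induction L generalizing η with
  | nil => exact ⟨trivial, rfl⟩
  | cons w L ih =>
    obtain ⟨hwV, hw, hL⟩ := hL
    have hxw : 3 < addGrain x η w := hw.trans_le (le_addGrain_apply x η w)
    simp only [LegalSeq, applySeq, toppleAt_addGrain x hw.le]
    exact ⟨⟨hwV, hxw, (ih hL).1⟩, (ih hL).2⟩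

theorem Stabilizes.trans_addGrain {η ζ ξ : S → ℕ} {x : S} (hζ : Stabilizes G V η ζ)
    (hξ : Stabilizes G V (addGrain x ζ) ξ) : Stabilizes G V (addGrain x η) ξ := by
  obtain ⟨L, hL, rfl, -⟩ := hζ
  obtain ⟨M, hM, rfl, hMst⟩ := hξ
  obtain ⟨hLx, hLx_eq⟩ := hL.legalSeq_addGrain x
  refine ⟨L ++ M, legalSeq_append.2 ⟨hLx, hLx_eq ▸ hM⟩, ?_, hMst⟩
  rw [applySeq_append, hLx_eq]

end Toppling

theorem card_le_three_of_forall_adj {T : Type*} {G : SimpleGraph T}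
    (hdeg : ∀ v, {w | G.Adj v w}.encard ≤ 3) {w : T} {W : Finset T}
    (hW : ∀ z ∈ W, G.Adj w z) : W.card ≤ 3 := by
  have : (W : Set T).encard ≤ 3 := (Set.encard_le_encard fun z hz => hW z hz).trans (hdeg w)
  rw [Set.encard_coe_eq_coe_finsetCard] at this
  exact_mod_cast this

section Existence

variable {G : SimpleGraph S} [DecidableRel G.Adj] {V : Finset S}

theorem sum_toppleAt_add_three (η : S → ℕ) {w : S} (hwV : w ∈ V) (hw : 3 ≤ η w) :
    ∑ z ∈ V, toppleAt G V η w z + 3 = ∑ z ∈ V, η z + #{z ∈ V.erase w | G.Adj w z} := by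
  rw [← add_sum_erase V _ hwV, ← add_sum_erase V η hwV, card_filter]
  have hrest : ∀ z ∈ V.erase w, toppleAt G V η w z = η z + if G.Adj w z then 1 else 0 := by
    intro z hz
    simp only [toppleAt, if_neg (ne_of_mem_erase hz), mem_of_mem_erase hz, true_and]
    split_ifs <;> rfl
  rw [sum_congr rfl hrest, sum_add_distrib]
  simp only [toppleAt, if_true]
  omega

theorem sum_toppleAt_le (hdeg : ∀ v, {w | G.Adj v w}.encard ≤ 3) (η : S → ℕ) {w : S}
    (hwV : w ∈ V) (hw : 3 ≤ η w) : ∑ z ∈ V, toppleAt G V η w z ≤ ∑ z ∈ V, η z := by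
  have := sum_toppleAt_add_three (G := G) η hwV hw
  have := card_le_three_of_forall_adj hdeg (W := {z ∈ V.erase w | G.Adj w z})
    fun z hz => (mem_filter.1 hz).2
  omega

theorem sum_toppleAt_lt (hdeg : ∀ v, {w | G.Adj v w}.encard ≤ 3) (η : S → ℕ) {w y : S}
    (hwV : w ∈ V) (hw : 3 ≤ η w) (hwy : G.Adj w y) (hyV : y ∉ V) :
    ∑ z ∈ V, toppleAt G V η w z < ∑ z ∈ V, η z := by
  have := sum_toppleAt_add_three (G := G) η hwV hw
  have := card_le_three_of_forall_adj hdeg (W := insert y {z ∈ V.erase w | G.Adj w z})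
    (by simpa using ⟨hwy, fun z _ _ h => h⟩)
  rw [card_insert_of_notMem (by simp [hyV])] at this
  omega

theorem LegalSeq.sum_applySeq_le (hdeg : ∀ v, {w | G.Adj v w}.encard ≤ 3) {η : S → ℕ}
    {L : List S} (hL : LegalSeq G V η L) :
    ∑ z ∈ V, applySeq G V η L z ≤ ∑ z ∈ V, η z := by
  induction L generalizing η with
  | nil => exact le_rfl
  | cons w L ih => exact (ih hL.2.2).trans (sum_toppleAt_le hdeg η hL.1 hL.2.1.le)

theorem LegalSeq.sum_applySeq_add_count_le (hdeg : ∀ v, {w | G.Adj v w}.encard ≤ 3)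
    {η : S → ℕ} {L : List S} (hL : LegalSeq G V η L) {x y : S} (hxy : G.Adj x y)
    (hyV : y ∉ V) : ∑ z ∈ V, applySeq G V η L z + L.count x ≤ ∑ z ∈ V, η z := by
  induction L generalizing η with
  | nil => simp [applySeq]
  | cons w L ih =>
    obtain ⟨hwV, hw, hL⟩ := hL
    have := ih hL
    rw [applySeq, List.count_cons]
    by_cases hxw : x = w
    · subst hxw
      have := sum_toppleAt_lt hdeg η hwV hw.le hxy hyV
      simp only [beq_self_eq_true, if_true]
      omega
    · have := sum_toppleAt_le hdeg η hwV hw.le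
      simp only [beq_iff_eq, if_neg (Ne.symm hxw)]
      omega

/-- Grains reaching `y` come from topplings of its neighbours and must be carried away again by
topplings of `y`, up to the total mass. -/
theorem LegalSeq.count_le_of_adj (hdeg : ∀ v, {w | G.Adj v w}.encard ≤ 3) {η : S → ℕ}
    {L : List S} (hL : LegalSeq G V η L) {z y : S} (hzy : G.Adj z y) :
    L.count z ≤ ∑ v ∈ V, η v + 3 * L.count y := by
  by_cases hyV : y ∈ V
  · have hy := hL.applySeq_add_count y
    rw [if_pos hyV] at hy
    have hzL : L.count z ≤ L.countP (G.Adj · y) :=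
      List.countP_mono_left fun v _ hv => by simpa [(beq_iff_eq.1 hv)] using hzy
    have := single_le_sum (fun v _ => Nat.zero_le (applySeq G V η L v)) hyV
    have := hL.sum_applySeq_le hdeg
    omega
  · have := hL.sum_applySeq_add_count_le hdeg hzy hyV
    omega

theorem exists_count_le_of_walk (hdeg : ∀ v, {w | G.Adj v w}.encard ≤ 3) (η : S → ℕ)
    {z u : S} (p : G.Walk z u) (hu : u ∉ V) : ∃ B, ∀ L, LegalSeq G V η L → L.count z ≤ B := by
  induction p with
  | nil => exact ⟨0, fun L hL => (List.count_eq_zero.2 fun h => hu (hL.mem h)).le⟩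
  | cons hzy _ ih =>
    obtain ⟨B, hB⟩ := ih hu
    exact ⟨_, fun L hL => (hL.count_le_of_adj hdeg hzy).trans (by grw [hB L hL])⟩

theorem exists_length_le (hdeg : ∀ v, {w | G.Adj v w}.encard ≤ 3)
    (hV : ∀ z ∈ V, ∃ u ∉ V, G.Reachable z u) (η : S → ℕ) :
    ∃ N, ∀ L, LegalSeq G V η L → L.length ≤ N := by
  have hB : ∀ z, ∃ B, z ∈ V → ∀ L, LegalSeq G V η L → L.count z ≤ B := by
    intro z
    by_cases hz : z ∈ V
    · obtain ⟨u, hu, ⟨p⟩⟩ := hV z hz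
      obtain ⟨B, hB⟩ := exists_count_le_of_walk hdeg η p hu
      exact ⟨B, fun _ => hB⟩
    · exact ⟨0, fun h => absurd h hz⟩
  choose B hB using hB
  refine ⟨∑ z ∈ V, B z, fun L hL => ?_⟩
  calc L.length = ∑ z ∈ V, L.count z := by
        simpa using (Multiset.sum_count_eq_card (m := (L : Multiset S)) fun _ => hL.mem).symm
    _ ≤ ∑ z ∈ V, B z := sum_le_sum fun z hz => hB z hz L hL

theorem exists_stabilizes_of_length_le {η : S → ℕ} {N : ℕ}
    (hN : ∀ L, LegalSeq G V η L → L.length ≤ N) : ∃ ζ, Stabilizes G V η ζ := by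
  induction N generalizing η with
  | zero =>
    refine ⟨η, [], trivial, rfl, fun x hxV => ?_⟩
    by_contra! hx
    simpa using hN [x] ⟨hxV, hx, trivial⟩
  | succ N ih =>
    by_cases hst : Stable V η
    · exact ⟨η, [], trivial, rfl, hst⟩
    obtain ⟨x, hxV, hx⟩ : ∃ x ∈ V, 3 < η x := by simpa [Stable] using hst
    obtain ⟨ζ, L, hL, hLζ, hζ⟩ := ih fun L hL => by simpa using hN (x :: L) ⟨hxV, hx, hL⟩
    exact ⟨ζ, x :: L, ⟨hxV, hx, hL⟩, hLζ, hζ⟩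

theorem stabilize_stabilizes (hdeg : ∀ v, {w | G.Adj v w}.encard ≤ 3)
    (hV : ∀ z ∈ V, ∃ u ∉ V, G.Reachable z u) (η : S → ℕ) :
    Stabilizes G V η (stabilize G V η) := by
  obtain ⟨N, hN⟩ := exists_length_le hdeg hV η
  obtain ⟨ζ, hζ⟩ := exists_stabilizes_of_length_le hN
  rwa [hζ.stabilize_eq]

theorem addOp_comm (hdeg : ∀ v, {w | G.Adj v w}.encard ≤ 3)
    (hV : ∀ z ∈ V, ∃ u ∉ V, G.Reachable z u) (x y : S) (η : S → ℕ) :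
    addOp G V x (addOp G V y η) = addOp G V y (addOp G V x η) := by
  have key (a b : S) :
      addOp G V a (addOp G V b η) = stabilize G V (addGrain a (addGrain b η)) :=
    ((stabilize_stabilizes hdeg hV _).trans_addGrain
      (stabilize_stabilizes hdeg hV _)).stabilize_eq.symm
  rw [key, key, addGrain_comm]

end Existence

theorem IsBinaryTree.encard_setOf_adj {T : Type*} {G : SimpleGraph T} (hG : IsBinaryTree G)
    (v : T) : {w | G.Adj v w}.encard = 3 := by
  have hfin : {w | G.Adj v w}.Finite := Set.finite_of_ncard_ne_zero (by rw [hG.2.2 v]; omega)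
  rw [← hfin.cast_ncard_eq, hG.2.2 v]
  rfl

/-- A finite tree has one edge fewer than vertices, a finite 3-regular graph has `3/2` times as
many edges as vertices. -/
theorem IsBinaryTree.infinite {T : Type*} {G : SimpleGraph T} (hG : IsBinaryTree G) :
    Infinite T := by
  by_contra hfin
  have : Fintype T := @Fintype.ofFinite T (not_infinite_iff_finite.1 hfin)
  classical
  have hdeg (v : T) : G.degree v = 3 := by
    rw [← hG.2.2 v, SimpleGraph.degree, ← Set.ncard_coe_finset, SimpleGraph.coe_neighborFinset]
    rfl
  have hsum := G.sum_degrees_eq_twice_card_edges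
  have htree := (SimpleGraph.IsTree.mk hG.1 hG.2.1).card_edgeFinset
  have : 0 < Fintype.card T := @Fintype.card_pos _ _ hG.1.nonempty
  simp only [hdeg, sum_const, card_univ, smul_eq_mul] at hsum
  omega

theorem IsBinaryTree.exists_reachable_notMem {T : Type*} {G : SimpleGraph T}
    (hG : IsBinaryTree G) (V : Finset T) (z : T) : ∃ u ∉ V, G.Reachable z u := by
  have := hG.infinite
  obtain ⟨u, hu⟩ := Infinite.exists_notMem_finset V
  exact ⟨u, hu, hG.1.preconnected z u⟩

theorem NormalCfg.eventually_addInf_eq {G : SimpleGraph S} [DecidableRel G.Adj] {η : S → ℕ}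
    (hη : NormalCfg G η) (x : S) : ∀ᶠ V in Filter.atTop, addInf G x η = addOp G V x η := by
  have h := hη x
  obtain ⟨-, hstab⟩ := h.choose_spec
  refine Filter.eventually_atTop.2 ⟨h.choose, fun V hV => ?_⟩
  rw [addInf, dif_pos h, ← hstab _ _ le_rfl le_sup_left, hstab _ _ hV le_sup_right]

theorem addInf_comm_general (G : SimpleGraph S) [DecidableRel G.Adj]
    (hG : IsBinaryTree G) (η : S → ℕ)
    (x y : S) (h0 : NormalCfg G η)
    (h1 : NormalCfg G (addInf G x η)) (h2 : NormalCfg G (addInf G y η)) :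
    addInf G x (addInf G y η) = addInf G y (addInf G x η) := by
  obtain ⟨V, ⟨hxy, hy⟩, hyx, hx⟩ := (((h2.eventually_addInf_eq x).and
    (h0.eventually_addInf_eq y)).and ((h1.eventually_addInf_eq y).and
    (h0.eventually_addInf_eq x))).exists
  rw [hxy, hy, addOp_comm (fun v => (hG.encard_setOf_adj v).le)
    (fun z _ => hG.exists_reachable_notMem V z), ← hx, hyx]

/-- The infinite-volume addition operators commute on normal configurations:
if `η`, `a_xη` and `a_yη` are all normal then `a_x(a_yη) = a_y(a_xη)`. -/
theorem addInf_comm (G : SimpleGraph S) [DecidableRel G.Adj]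
    (hG : IsBinaryTree G) (η : S → ℕ) (hval : ∀ z : S, 1 ≤ η z ∧ η z ≤ 3)
    (x y : S) (h0 : NormalCfg G η)
    (h1 : NormalCfg G (addInf G x η)) (h2 : NormalCfg G (addInf G y η)) :
    addInf G x (addInf G y η) = addInf G y (addInf G x η) :=
  addInf_comm_general G hG η x y h0 h1 h2
end

section
/- Let V be a finite nonempty subset of the rootless binary tree S and let x ∉ V be a vertex having at most one neighbour in V. Then the map sending η ∈ 𝒜_V to its extension ζ on V ∪ {x} with ζ|_V = η and ζ(x) = 3 is a bijection from 𝒜_V onto {ζ ∈ 𝒜_{V∪{x}} : ζ(x) = 3}. Consequently, under the uniform probability measure μ_{V∪{x}} on 𝒜_{V∪{x}}, one has μ_{V∪{x}}(ζ(x) = 3) = |𝒜_V| / |𝒜_{V∪{x}}|. -/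
open Finset

variable {S : Type*} [DecidableEq S]

/-- Extending an allowed configuration on `V` by height 3 at a new vertex `x`
having at most one neighbour in `V` is a bijection onto
`{ζ ∈ 𝒜_{V∪{x}} : ζ x = 3}`; consequently
`μ_{V∪{x}}(ζ x = 3) = |𝒜_V| / |𝒜_{V∪{x}}|`. -/
theorem extension_bijection (G : SimpleGraph S) [DecidableRel G.Adj]
    (hG : IsBinaryTree G) (V : Finset S) (hV : V.Nonempty)
    (x : S) (hx : x ∉ V) (hnb : (V.filter (fun y => G.Adj x y)).card ≤ 1) :
    Set.BijOn (fun η => Function.update η x 3) {η | AllowedExt G V η}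
      {ζ | AllowedExt G (insert x V) ζ ∧ ζ x = 3} ∧
    ({ζ | AllowedExt G (insert x V) ζ ∧ ζ x = 3}.ncard : ℝ) /
        ({ζ | AllowedExt G (insert x V) ζ}.ncard : ℝ) =
      ({η | AllowedExt G V η}.ncard : ℝ) /
        ({ζ | AllowedExt G (insert x V) ζ}.ncard : ℝ) := by
  have hbij : Set.BijOn (fun η => Function.update η x 3) {η | AllowedExt G V η}
      {ζ | AllowedExt G (insert x V) ζ ∧ ζ x = 3} := by
    refine ⟨?_, ?_, ?_⟩
    · -- MapsTo
      rintro η ⟨⟨hstab, hfsc⟩, hpad⟩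
      simp only [Set.mem_setOf_eq]
      refine ⟨⟨⟨?_, ?_⟩, ?_⟩, Function.update_self x 3 η⟩
      · intro y hy
        rcases Finset.mem_insert.mp hy with rfl | hyV
        · simp
        · have hyx : y ≠ x := fun h => hx (h ▸ hyV)
          simp only [Function.update_of_ne hyx]
          exact hstab y hyV
      · rintro ⟨W, hWsub, hWne, hWall⟩
        by_cases hxW : x ∈ W
        · have h3 : (3 : ℕ) ≤ (W.filter (fun y => y ≠ x ∧ G.Adj x y)).card := by
            have h := hWall x hxW
            simpa using h
          have hsub : W.filter (fun y => y ≠ x ∧ G.Adj x y) ⊆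
              V.filter (fun y => G.Adj x y) := by
            intro y hy
            rw [Finset.mem_filter] at hy ⊢
            rcases Finset.mem_insert.mp (hWsub hy.1) with rfl | hyV
            · exact absurd rfl hy.2.1
            · exact ⟨hyV, hy.2.2⟩
          have := Finset.card_le_card hsub
          omega
        · apply hfsc
          refine ⟨W, fun y hy => ?_, hWne, fun z hz => ?_⟩
          · rcases Finset.mem_insert.mp (hWsub hy) with rfl | h
            · exact absurd hy hxW
            · exact h
          · have hzx : z ≠ x := fun h => hxW (h ▸ hz)
            have h := hWall z hz
            simpa only [Function.update_of_ne hzx] using h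
      · intro y hy
        have hyx : y ≠ x := fun h => hy (h ▸ Finset.mem_insert_self x V)
        simp only [Function.update_of_ne hyx]
        exact hpad y (fun h => hy (Finset.mem_insert_of_mem h))
    · -- InjOn
      rintro η ⟨_, hpad⟩ η' ⟨_, hpad'⟩ heq
      funext y
      by_cases hyx : y = x
      · subst hyx; rw [hpad y hx, hpad' y hx]
      · have h := congrFun heq y
        simpa only [Function.update_of_ne hyx] using h
    · -- SurjOn
      rintro ζ ⟨⟨⟨hstab, hfsc⟩, hpad⟩, hζx⟩
      refine ⟨Function.update ζ x 1, ⟨⟨?_, ?_⟩, ?_⟩, ?_⟩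
      · intro y hy
        have hyx : y ≠ x := fun h => hx (h ▸ hy)
        simp only [Function.update_of_ne hyx]
        exact hstab y (Finset.mem_insert_of_mem hy)
      · rintro ⟨W, hWsub, hWne, hWall⟩
        apply hfsc
        have hxW : x ∉ W := fun h => hx (hWsub h)
        refine ⟨W, fun y hy => Finset.mem_insert_of_mem (hWsub hy), hWne,
          fun z hz => ?_⟩
        have hzx : z ≠ x := fun h => hxW (h ▸ hz)
        have h := hWall z hz
        simpa only [Function.update_of_ne hzx] using h
      · intro y hy
        by_cases hyx : y = x
        · subst hyx; simp
        · simp only [Function.update_of_ne hyx]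
          exact hpad y (fun h => hy ((Finset.mem_insert.mp h).elim
            (fun h' => absurd h' hyx) id))
      · funext y
        by_cases hyx : y = x
        · subst hyx; simp [hζx]
        · simp [Function.update_of_ne hyx]
  refine ⟨hbij, ?_⟩
  congr 2
  rw [← hbij.image_eq, Set.ncard_image_of_injOn hbij.injOn]
end

section
/- Transfer matrix estimate: for every n ≥ 1 and all γ_1, …, γ_n ∈ [0,1], let M = ∏_{i=1}^n [[1+γ_i, 1+γ_i],[1, 2+γ_i]] (product of 2×2 real matrices). Then det(M) = ∏_{i=1}^n (1+γ_i)², the trace satisfies Tr(M) ≥ ∏_{i=1}^n (1+γ_i) + ∏_{i=1}^n (2+γ_i), and det(M) / (Tr(M))² ≤ (4/9)^n. -/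
/-!
The transfer matrices have determinant `(1 + γ)²` and nonnegative entries. Determinants are
multiplicative, and for products of matrices with nonnegative entries each diagonal entry dominates
the product of the corresponding diagonal entries; this gives the determinant and the trace bound.
Since `(1 + γ) ≤ (2/3) (2 + γ)` on `[0, 1]`, the root `∏ (1 + γᵢ)` of the determinant is at most
`(2/3)ⁿ ∏ (2 + γᵢ) ≤ (2/3)ⁿ Tr M`, which is the ratio bound.
-/

namespace Matrix

variable {m R : Type*} [Fintype m] [DecidableEq m] [Semiring R] [PartialOrder R] [IsOrderedRing R]

theorem list_prod_apply_nonneg {L : List (Matrix m m R)} (hL : ∀ A ∈ L, ∀ i j, 0 ≤ A i j)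
    (i j : m) : 0 ≤ L.prod i j := by
  induction L generalizing i j with
  | nil => simp only [List.prod_nil, one_apply]; split_ifs <;> simp
  | cons A L ih =>
    rw [List.prod_cons, mul_apply]
    exact Finset.sum_nonneg fun k _ =>
      mul_nonneg (hL A List.mem_cons_self i k)
        (ih (fun B hB => hL B (List.mem_cons_of_mem A hB)) k j)

theorem prod_map_diag_le_list_prod_apply {L : List (Matrix m m R)}
    (hL : ∀ A ∈ L, ∀ i j, 0 ≤ A i j) (i : m) : (L.map fun A => A i i).prod ≤ L.prod i i := by
  induction L with
  | nil => simp
  | cons A L ih =>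
    have hL' : ∀ B ∈ L, ∀ i j, 0 ≤ B i j := fun B hB => hL B (List.mem_cons_of_mem A hB)
    have hA : ∀ i j, 0 ≤ A i j := hL A List.mem_cons_self
    rw [List.map_cons, List.prod_cons, List.prod_cons, mul_apply]
    calc A i i * (L.map fun A => A i i).prod ≤ A i i * L.prod i i :=
          mul_le_mul_of_nonneg_left (ih hL') (hA i i)
      _ ≤ ∑ k, A i k * L.prod k i :=
          Finset.single_le_sum (f := fun k => A i k * L.prod k i)
            (fun k _ => mul_nonneg (hA i k) (list_prod_apply_nonneg hL' k i)) (Finset.mem_univ i)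

end Matrix

theorem List.prod_map_range_eq_prod_range {M : Type*} [CommMonoid M] (n : ℕ) (f : ℕ → M) :
    ((List.range n).map f).prod = ∏ i ∈ Finset.range n, f i := by
  rw [Finset.prod_eq_multiset_prod, Finset.range_val, ← Multiset.coe_range, Multiset.map_coe,
    Multiset.prod_coe]

theorem sq_div_sq_le_sq_of_le_mul {K : Type*} [Field K] [LinearOrder K] [IsStrictOrderedRing K]
    {a b c t : K} (ha : 0 ≤ a) (hc : 0 ≤ c) (hab : a ≤ c * b)
    (hb : 0 < b) (hbt : b ≤ t) : a ^ 2 / t ^ 2 ≤ c ^ 2 := by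
  have ht : 0 < t := hb.trans_le hbt
  have hact : a ≤ c * t := hab.trans (mul_le_mul_of_nonneg_left hbt hc)
  rw [div_le_iff₀ (by positivity), ← mul_pow]
  exact pow_le_pow_left₀ ha hact 2

def transferMatrix (γ : ℝ) : Matrix (Fin 2) (Fin 2) ℝ :=
  !![1 + γ, 1 + γ; 1, 2 + γ]

theorem det_transferMatrix (γ : ℝ) : (transferMatrix γ).det = (1 + γ) ^ 2 := by
  rw [transferMatrix, Matrix.det_fin_two_of]
  ring

theorem transferMatrix_apply_nonneg {γ : ℝ} (hγ : 0 ≤ γ) (i j : Fin 2) :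
    0 ≤ transferMatrix γ i j := by
  fin_cases i <;> fin_cases j <;> simp [transferMatrix] <;> linarith

section TransferProduct

variable (n : ℕ) (γ : ℕ → ℝ)

theorem det_transferProduct :
    ((List.range n).map fun i => transferMatrix (γ i)).prod.det =
      ∏ i ∈ Finset.range n, (1 + γ i) ^ 2 := by
  rw [← Matrix.coe_detMonoidHom, map_list_prod, List.map_map]
  simp only [Function.comp_def, Matrix.coe_detMonoidHom, det_transferMatrix]
  exact List.prod_map_range_eq_prod_range n _

theorem trace_transferProduct_ge (hγ : ∀ i ∈ Finset.range n, 0 ≤ γ i) :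
    ∏ i ∈ Finset.range n, (1 + γ i) + ∏ i ∈ Finset.range n, (2 + γ i) ≤
      ((List.range n).map fun i => transferMatrix (γ i)).prod.trace := by
  have hnonneg : ∀ A ∈ (List.range n).map fun i => transferMatrix (γ i), ∀ i j, 0 ≤ A i j := by
    simp only [List.mem_map, List.mem_range]
    rintro _ ⟨k, hk, rfl⟩
    exact transferMatrix_apply_nonneg (hγ k (Finset.mem_range.2 hk))
  rw [Matrix.trace_fin_two]
  gcongr
  · simpa [List.map_map, Function.comp_def, transferMatrix, List.prod_map_range_eq_prod_range]
      using Matrix.prod_map_diag_le_list_prod_apply hnonneg 0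
  · simpa [List.map_map, Function.comp_def, transferMatrix, List.prod_map_range_eq_prod_range]
      using Matrix.prod_map_diag_le_list_prod_apply hnonneg 1

theorem prod_one_add_le (hγ : ∀ i ∈ Finset.range n, γ i ∈ Set.Icc (0 : ℝ) 1) :
    ∏ i ∈ Finset.range n, (1 + γ i) ≤ (2 / 3 : ℝ) ^ n * ∏ i ∈ Finset.range n, (2 + γ i) := by
  rw [← Finset.card_range n, ← Finset.prod_const, Finset.card_range, ← Finset.prod_mul_distrib]
  refine Finset.prod_le_prod (fun i hi => ?_) (fun i hi => ?_) <;>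
    linarith [(hγ i hi).1, (hγ i hi).2]

end TransferProduct

theorem transfer_matrix_estimate_general (n : ℕ) (γ : ℕ → ℝ)
    (hγ : ∀ i ∈ Finset.range n, γ i ∈ Set.Icc (0 : ℝ) 1) :
    ∀ M : Matrix (Fin 2) (Fin 2) ℝ,
      M = ((List.range n).map (fun i => !![1 + γ i, 1 + γ i; 1, 2 + γ i])).prod →
      M.det = ∏ i ∈ Finset.range n, (1 + γ i) ^ 2 ∧
      Matrix.trace M ≥
        ∏ i ∈ Finset.range n, (1 + γ i) + ∏ i ∈ Finset.range n, (2 + γ i) ∧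
      M.det / (Matrix.trace M) ^ 2 ≤ (4 / 9 : ℝ) ^ n := by
  rintro M (rfl : M = ((List.range n).map fun i => transferMatrix (γ i)).prod)
  have hγ₀ : ∀ i ∈ Finset.range n, 0 ≤ γ i := fun i hi => (hγ i hi).1
  have hdet := det_transferProduct n γ
  have htrace := trace_transferProduct_ge n γ hγ₀
  refine ⟨hdet, htrace, ?_⟩
  have hb : 0 < ∏ i ∈ Finset.range n, (2 + γ i) :=
    Finset.prod_pos fun i hi => by linarith [hγ₀ i hi]
  have ha : 0 ≤ ∏ i ∈ Finset.range n, (1 + γ i) :=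
    Finset.prod_nonneg fun i hi => by linarith [hγ₀ i hi]
  have hratio : (4 / 9 : ℝ) ^ n = ((2 / 3) ^ n) ^ 2 := by
    rw [← pow_mul, mul_comm, pow_mul]; norm_num
  rw [hdet, Finset.prod_pow, hratio]
  exact sq_div_sq_le_sq_of_le_mul ha (by positivity) (prod_one_add_le n γ hγ) hb
    (by linarith)

/-- Transfer matrix estimate: for `M = ∏_{i=1}^n [[1+γ_i, 1+γ_i],[1, 2+γ_i]]` with
`γ_i ∈ [0,1]`, one has `det M = ∏ (1+γ_i)²`,
`Tr M ≥ ∏ (1+γ_i) + ∏ (2+γ_i)`, and `det M / (Tr M)² ≤ (4/9)^n`. -/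
theorem transfer_matrix_estimate (n : ℕ) (hn : 1 ≤ n) (γ : ℕ → ℝ)
    (hγ : ∀ i ∈ Finset.range n, γ i ∈ Set.Icc (0 : ℝ) 1) :
    ∀ M : Matrix (Fin 2) (Fin 2) ℝ,
      M = ((List.range n).map (fun i => !![1 + γ i, 1 + γ i; 1, 2 + γ i])).prod →
      M.det = ∏ i ∈ Finset.range n, (1 + γ i) ^ 2 ∧
      Matrix.trace M ≥
        ∏ i ∈ Finset.range n, (1 + γ i) + ∏ i ∈ Finset.range n, (2 + γ i) ∧
      M.det / (Matrix.trace M) ^ 2 ≤ (4 / 9 : ℝ) ^ n :=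
  transfer_matrix_estimate_general n γ hγ
end
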